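/- Unconditional bound on the mass at internal stages (Theorem 3.2, inequality (5.1b)): under the abstract Gauss collocation SAV scheme with ⟨G(v), v⟩ ∈ ℝ for every v ∈ V, there is a constant C depending only on k (independent of τ, N, V, a, G, u_h, r_h) such that max over n = 1,...,N and j = 1,...,k of ‖u_h(t_{nj})‖ ≤ C·‖u_h(0)‖. -/

import Mathlib

/-!
On `I_n`, testing (i) with `v = u_h(t_{nj})` and taking imaginary parts gives
`Re ⟨u_h, u_h'⟩ = 0` at the Gauss points, so `h(s) = ‖u_h(t_{n-1} + (1 + s) τ / 2)‖²`, a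
nonnegative polynomial of degree `≤ 2k`, has `h'(c_j) = 0`. Hence `h' = ω q` with
`ω = ∏ (X - c_j)` and `deg q < k`. As `ω` is a multiple of the Legendre polynomial, it is
orthogonal to all polynomials of degree `< k`; this gives `h(1) = h(-1)` (the mass is conserved
at the nodes) and, integrating `(X h)'`, `∫ h = 2 h(-1) - 2k · coeff_{2k}(h) · ∫ ω² ≤ 2 h(-1)`,
the top coefficient being `≥ 0` because `h ≥ 0`. Finally, all norms on polynomials of degree
`≤ 2k` are equivalent, so `h(c_j) ≤ C₀ ∫ h`.
-/

open MeasureTheory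

universe u

/-- The (unnormalized) Legendre polynomial of degree `k`: `d^k/dx^k [(x² - 1)^k]`. -/
noncomputable def legendre (k : ℕ) : Polynomial ℝ :=
  Polynomial.derivative^[k] ((Polynomial.X ^ 2 - 1 : Polynomial ℝ) ^ k)

/-- `f : ℝ → X` is an `X`-valued polynomial of degree at most `m`. -/
def IsPolyDeg (X : Type*) [AddCommGroup X] [Module ℝ X] (m : ℕ) (f : ℝ → X) : Prop :=
  ∃ φ : Fin (m + 1) → X, ∀ t : ℝ, f t = ∑ i : Fin (m + 1), t ^ (i : ℕ) • φ i

/-- The `j`-th Gauss collocation point `t_{nj} = t_{n-1} + (1 + c_j) τ / 2` of the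
interval `I_n = [(n-1)τ, nτ]`. -/
noncomputable def collocPt (τ : ℝ) (n : ℕ) (cj : ℝ) : ℝ :=
  ((n : ℝ) - 1) * τ + (1 + cj) * τ / 2

open Polynomial Lagrange intervalIntegral Set

theorem integral_eval_derivative (p : ℝ[X]) (a b : ℝ) :
    ∫ x in a..b, p.derivative.eval x = p.eval b - p.eval a :=
  integral_eq_sub_of_hasDerivAt (fun x _ => p.hasDerivAt x)
    (p.derivative.continuous.intervalIntegrable a b)

theorem integral_eval_derivative_mul (p q : ℝ[X]) (a b : ℝ) :
    ∫ x in a..b, p.derivative.eval x * q.eval x =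
      p.eval b * q.eval b - p.eval a * q.eval a - ∫ x in a..b, p.eval x * q.derivative.eval x := by
  have hsplit : ∀ x, p.derivative.eval x * q.eval x =
      (p * q).derivative.eval x - p.eval x * q.derivative.eval x := fun x => by
    simp [derivative_mul]
  simp_rw [hsplit]
  rw [intervalIntegral.integral_sub ((p * q).derivative.continuous.intervalIntegrable a b)
    (Continuous.intervalIntegrable (by fun_prop) a b), integral_eval_derivative]
  simp

theorem eval_iterate_derivative_X_sq_sub_one_pow_eq_zero {k j : ℕ} (hj : j < k) {x : ℝ}
    (hx : x ^ 2 = 1) : (derivative^[j] ((X ^ 2 - 1 : ℝ[X]) ^ k)).eval x = 0 := by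
  obtain ⟨q, hq⟩ := pow_sub_dvd_iterate_derivative_pow (X ^ 2 - 1 : ℝ[X]) k j
  rw [hq, eval_mul, eval_pow]
  simp [hx, Nat.sub_ne_zero_of_lt hj]

theorem integral_iterate_derivative_X_sq_sub_one_pow_mul_eq_zero {k j : ℕ} (hj : j ≤ k)
    {q : ℝ[X]} (hq : derivative^[j] q = 0) :
    ∫ x in (-1)..1, (derivative^[j] ((X ^ 2 - 1 : ℝ[X]) ^ k)).eval x * q.eval x = 0 := by
  induction j generalizing q with
  | zero => simp_all
  | succ j ih =>
    rw [Function.iterate_succ_apply', integral_eval_derivative_mul,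
      ih (by omega) (by rwa [← Function.iterate_succ_apply]),
      eval_iterate_derivative_X_sq_sub_one_pow_eq_zero (by omega) (by norm_num),
      eval_iterate_derivative_X_sq_sub_one_pow_eq_zero (by omega) (by norm_num)]
    simp

theorem integral_legendre_mul_eq_zero {k : ℕ} {q : ℝ[X]} (hq : q ∈ degreeLT ℝ k) :
    ∫ x in (-1)..1, (legendre k).eval x * q.eval x = 0 :=
  integral_iterate_derivative_X_sq_sub_one_pow_mul_eq_zero le_rfl
    (iterate_derivative_eq_zero_of_degree_lt (mem_degreeLT.mp hq))

theorem monic_X_sq_sub_one_pow (k : ℕ) : ((X ^ 2 - 1 : ℝ[X]) ^ k).Monic := by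
  simpa using ((monic_X_pow_sub_C (1 : ℝ) two_ne_zero).pow k)

theorem natDegree_X_sq_sub_one_pow (k : ℕ) : ((X ^ 2 - 1 : ℝ[X]) ^ k).natDegree = 2 * k := by
  rw [natDegree_pow, ← C_1, natDegree_X_pow_sub_C, mul_comm]

theorem natDegree_legendre_le (k : ℕ) : (legendre k).natDegree ≤ k := by
  have := natDegree_iterate_derivative ((X ^ 2 - 1 : ℝ[X]) ^ k) k
  rw [natDegree_X_sq_sub_one_pow] at this
  unfold legendre
  omega

theorem legendre_ne_zero (k : ℕ) : legendre k ≠ 0 := by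
  intro h
  have hcoeff := congrArg (coeff · k) h
  simp only [legendre, coeff_iterate_derivative, ← two_mul, coeff_zero] at hcoeff
  rw [← natDegree_X_sq_sub_one_pow k, (monic_X_sq_sub_one_pow k).coeff_natDegree,
    natDegree_X_sq_sub_one_pow, nsmul_one, Nat.cast_eq_zero,
    Nat.descFactorial_eq_zero_iff_lt] at hcoeff
  omega

theorem nodal_dvd_of_eval_eq_zero {ι K : Type*} [Field K] {s : Finset ι} {v : ι → K}
    (hv : Function.Injective v) {p : K[X]} (hp : ∀ i ∈ s, p.eval (v i) = 0) : nodal s v ∣ p := by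
  rw [nodal_eq]
  exact Finset.prod_dvd_of_coprime ((pairwise_coprime_X_sub_C hv).set_pairwise _)
    fun i hi => dvd_iff_isRoot.mpr (hp i hi)

theorem sub_C_coeff_mul_mem_degreeLT {R : Type*} [CommRing R] {p ω : R[X]} (hω : ω.Monic)
    (hp : p.natDegree ≤ ω.natDegree) :
    p - C (p.coeff ω.natDegree) * ω ∈ degreeLT R ω.natDegree := by
  rw [mem_degreeLT, degree_lt_iff_coeff_zero]
  intro m hm
  rcases hm.eq_or_lt with rfl | hlt
  · simp [hω.coeff_natDegree]
  · simp [coeff_eq_zero_of_natDegree_lt (hp.trans_lt hlt), coeff_eq_zero_of_natDegree_lt hlt]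

theorem natDegree_X_mul_le_of_mem_degreeLT {R : Type*} [CommRing R] [Nontrivial R] {q : R[X]}
    {k : ℕ} (hq : q ∈ degreeLT R k) : (X * q).natDegree ≤ k := by
  rcases eq_or_ne q 0 with rfl | hq0
  · simp
  · rw [natDegree_X_mul hq0]
    exact (natDegree_lt_iff_degree_lt hq0).mpr (mem_degreeLT.mp hq)

theorem coeff_X_mul_derivative {R : Type*} [CommSemiring R] (p : R[X]) (n : ℕ) :
    (X * derivative p).coeff n = n * p.coeff n := by
  cases n with
  | zero => simp
  | succ n => rw [coeff_X_mul, coeff_derivative]; push_cast; ring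

section GaussNodes

variable {k : ℕ} {c : Fin k → ℝ}

theorem integral_nodal_mul_eq_zero (hc : Function.Injective c)
    (hroot : ∀ j, (legendre k).eval (c j) = 0) {q : ℝ[X]} (hq : q ∈ degreeLT ℝ k) :
    ∫ x in (-1)..1, (nodal Finset.univ c).eval x * q.eval x = 0 := by
  have hL := eq_leadingCoeff_mul_of_monic_of_dvd_of_natDegree_le nodal_monic
    (nodal_dvd_of_eval_eq_zero hc fun j _ => hroot j)
    (by rw [natDegree_nodal, Finset.card_univ, Fintype.card_fin]; exact natDegree_legendre_le k)
  have horth := integral_legendre_mul_eq_zero hq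
  rw [hL] at horth
  simp only [eval_mul, eval_C, mul_assoc, intervalIntegral.integral_const_mul] at horth
  exact (mul_eq_zero.mp horth).resolve_left (leadingCoeff_ne_zero.mpr (legendre_ne_zero k))

theorem exists_derivative_eq_nodal_mul (hc : Function.Injective c) {h : ℝ[X]}
    (hdeg : h.natDegree ≤ 2 * k) (hder : ∀ j, h.derivative.eval (c j) = 0) :
    ∃ q ∈ degreeLT ℝ k, h.derivative = nodal Finset.univ c * q := by
  obtain ⟨q, hq⟩ := nodal_dvd_of_eval_eq_zero hc fun j _ => hder j
  refine ⟨q, ?_, hq⟩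
  rcases eq_or_ne q 0 with rfl | hq0
  · exact zero_mem _
  have hh' : h.derivative ≠ 0 := by rw [hq]; exact mul_ne_zero nodal_monic.ne_zero hq0
  have hlt := natDegree_derivative_lt (p := h) fun h0 => hh' (derivative_of_natDegree_zero h0)
  rw [hq, natDegree_mul nodal_monic.ne_zero hq0, natDegree_nodal, Finset.card_univ,
    Fintype.card_fin] at hlt
  exact mem_degreeLT.mpr ((natDegree_lt_iff_degree_lt hq0).mp (by omega))

variable {h : ℝ[X]}

theorem eval_one_eq_eval_neg_one (hc : Function.Injective c)
    (hroot : ∀ j, (legendre k).eval (c j) = 0) (hdeg : h.natDegree ≤ 2 * k)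
    (hder : ∀ j, h.derivative.eval (c j) = 0) :
    h.eval 1 = h.eval (-1) := by
  obtain ⟨q, hq, hh'⟩ := exists_derivative_eq_nodal_mul hc hdeg hder
  have hftc := integral_eval_derivative h (-1) 1
  simp only [hh', eval_mul, integral_nodal_mul_eq_zero hc hroot hq] at hftc
  linarith

theorem integral_mul_eval_derivative (hc : Function.Injective c)
    (hroot : ∀ j, (legendre k).eval (c j) = 0) (hdeg : h.natDegree ≤ 2 * k)
    (hder : ∀ j, h.derivative.eval (c j) = 0) :
    ∫ x in (-1)..1, x * h.derivative.eval x =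
      2 * k * h.coeff (2 * k) * ∫ x in (-1)..1, (nodal Finset.univ c).eval x ^ 2 := by
  obtain ⟨q, hq, hh'⟩ := exists_derivative_eq_nodal_mul hc hdeg hder
  set ω := nodal Finset.univ c
  have hω : ω.natDegree = k := by simp [ω, natDegree_nodal]
  have hXq := natDegree_X_mul_le_of_mem_degreeLT hq
  -- `X q = b ω + r` with `deg r < k`, and `b` is the top coefficient of `X h' = ω (X q)`
  have hb : (X * q).coeff k = 2 * k * h.coeff (2 * k) := by
    have := coeff_mul_add_eq_of_natDegree_le hω.le hXq
    have hω_top : ω.coeff k = 1 := hω ▸ nodal_monic.coeff_natDegree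
    rw [hω_top, one_mul, mul_left_comm, ← hh', coeff_X_mul_derivative] at this
    rw [← this, ← two_mul]
    push_cast
    ring
  set r := X * q - C ((X * q).coeff k) * ω
  have hr : r ∈ degreeLT ℝ k := by
    have := sub_C_coeff_mul_mem_degreeLT (nodal_monic (s := Finset.univ) (v := c)) (hω ▸ hXq)
    rwa [hω] at this
  have hsplit : ∀ x, x * h.derivative.eval x =
      (X * q).coeff k * ω.eval x ^ 2 + ω.eval x * r.eval x := fun x => by
    simp only [r, hh', eval_mul, eval_sub, eval_X, eval_C]
    ring
  have hi₁ : IntervalIntegrable (fun x => (X * q).coeff k * ω.eval x ^ 2) volume (-1) 1 :=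
    Continuous.intervalIntegrable (by fun_prop) _ _
  have hi₂ : IntervalIntegrable (fun x => ω.eval x * r.eval x) volume (-1) 1 :=
    Continuous.intervalIntegrable (by fun_prop) _ _
  simp_rw [hsplit]
  rw [intervalIntegral.integral_add hi₁ hi₂, intervalIntegral.integral_const_mul,
    integral_nodal_mul_eq_zero hc hroot hr, hb, add_zero]

theorem integral_eval_le_eval_one_add_eval_neg_one (hc : Function.Injective c)
    (hroot : ∀ j, (legendre k).eval (c j) = 0) (hdeg : h.natDegree ≤ 2 * k)
    (hder : ∀ j, h.derivative.eval (c j) = 0) (hcoeff : 0 ≤ h.coeff (2 * k)) :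
    ∫ x in (-1)..1, h.eval x ≤ h.eval 1 + h.eval (-1) := by
  have hftc := integral_eval_derivative (X * h) (-1) 1
  have hsplit : ∀ x, (X * h).derivative.eval x = h.eval x + x * h.derivative.eval x :=
    fun x => by simp [derivative_mul]
  simp_rw [hsplit] at hftc
  rw [intervalIntegral.integral_add (h.continuous.intervalIntegrable _ _)
    ((by fun_prop : Continuous fun x => x * h.derivative.eval x).intervalIntegrable _ _),
    integral_mul_eval_derivative hc hroot hdeg hder] at hftc
  have hcorr : 0 ≤ 2 * k * h.coeff (2 * k) * ∫ x in (-1)..1, (nodal Finset.univ c).eval x ^ 2 :=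
    mul_nonneg (by positivity) (integral_nonneg (by norm_num) fun x _ => sq_nonneg _)
  simp only [eval_mul, eval_X] at hftc
  linarith

end GaussNodes

theorem leadingCoeff_nonneg_of_eval_nonneg {p : ℝ[X]} (hp : ∀ x, 0 ≤ p.eval x) :
    0 ≤ p.leadingCoeff := by
  by_contra! hlc
  rcases le_or_gt p.degree 0 with hdeg | hdeg
  · rw [eq_C_of_degree_le_zero hdeg, leadingCoeff_C, coeff_zero_eq_eval_zero] at hlc
    exact (hp 0).not_gt hlc
  · obtain ⟨x, hx⟩ := ((tendsto_atBot_of_leadingCoeff_nonpos p hdeg hlc.le).eventually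
      (Filter.eventually_lt_atBot 0)).exists
    exact (hp x).not_gt hx

theorem coeff_nonneg_of_eval_nonneg {p : ℝ[X]} (hp : ∀ x, 0 ≤ p.eval x) {n : ℕ}
    (hn : p.natDegree ≤ n) : 0 ≤ p.coeff n := by
  rcases hn.eq_or_lt with rfl | hlt
  · exact leadingCoeff_nonneg_of_eval_nonneg hp
  · rw [coeff_eq_zero_of_natDegree_lt hlt]

theorem integral_abs_eval_pos {p : ℝ[X]} (hp : p ≠ 0) : 0 < ∫ x in (-1)..1, |p.eval x| := by
  obtain ⟨x, hx, hpx⟩ : ∃ x ∈ Icc (-1 : ℝ) 1, p.eval x ≠ 0 := by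
    by_contra! h
    exact Icc_infinite (by norm_num : (-1 : ℝ) < 1) ((finite_setOfPred_isRoot hp).subset h)
  simpa using integral_lt_integral_of_continuousOn_of_le_of_exists_lt (by norm_num)
    continuousOn_const p.continuous.abs.continuousOn (fun x _ => abs_nonneg (p.eval x))
    ⟨x, hx, abs_pos.mpr hpx⟩

theorem abs_sum_mul_pow_le {m : ℕ} (a : Fin m → ℝ) {x : ℝ} (hx : |x| ≤ 1) :
    |∑ i, a i * x ^ (i : ℕ)| ≤ m * ‖a‖ :=
  calc |∑ i, a i * x ^ (i : ℕ)| ≤ ∑ i, |a i * x ^ (i : ℕ)| := Finset.abs_sum_le_sum_abs _ _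
    _ ≤ ∑ _i : Fin m, ‖a‖ := Finset.sum_le_sum fun i _ => by
      rw [abs_mul, abs_pow]
      exact (mul_le_of_le_one_right (abs_nonneg _) (pow_le_one₀ (abs_nonneg _) hx)).trans
        (norm_le_pi_norm a i)
    _ = m * ‖a‖ := by simp

theorem exists_abs_eval_le_mul_integral_abs (d : ℕ) :
    ∃ C, 0 < C ∧ ∀ p : ℝ[X], p.natDegree ≤ d → ∀ x ∈ Icc (-1 : ℝ) 1,
      |p.eval x| ≤ C * ∫ t in (-1)..1, |p.eval t| := by
  let e := degreeLTEquiv ℝ (d + 1)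
  let F : (Fin (d + 1) → ℝ) → ℝ := fun a => ∫ t in (-1)..1, |∑ i, a i * t ^ (i : ℕ)|
  have hF : ∀ p : degreeLT ℝ (d + 1), F (e p) = ∫ t in (-1)..1, |(p : ℝ[X]).eval t| := by
    rintro ⟨p, hp⟩
    simp [F, e, eval_eq_sum_degreeLTEquiv hp]
  have hF_smul : ∀ (s : ℝ) a, F (s • a) = |s| * F a := fun s a => by
    simp [F, Finset.mul_sum, mul_assoc, ← intervalIntegral.integral_const_mul, ← abs_mul]
  have hF_nonneg : ∀ a, 0 ≤ F a := fun a =>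
    intervalIntegral.integral_nonneg (by norm_num) fun _ _ => abs_nonneg _
  have hF_cont : Continuous F :=
    intervalIntegral.continuous_parametric_intervalIntegral_of_continuous' (by fun_prop) _ _
  obtain ⟨a₀, ha₀, hmin⟩ := (isCompact_sphere (0 : Fin (d + 1) → ℝ) 1).exists_isMinOn
    (NormedSpace.sphere_nonempty.mpr zero_le_one) hF_cont.continuousOn
  have hpos : 0 < F a₀ := by
    obtain ⟨p, rfl⟩ := e.surjective a₀
    rw [hF]
    refine integral_abs_eval_pos fun hp0 => ?_
    simp [show p = 0 from Subtype.ext hp0] at ha₀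
  have hlower : ∀ a, F a₀ * ‖a‖ ≤ F a := fun a => by
    rcases eq_or_ne a 0 with rfl | ha
    · simpa using hF_nonneg 0
    have hmem : ‖a‖⁻¹ • a ∈ Metric.sphere (0 : Fin (d + 1) → ℝ) 1 := by
      simp [norm_smul, ha]
    have := isMinOn_iff.mp hmin _ hmem
    rw [hF_smul, abs_of_pos (by positivity)] at this
    rwa [inv_mul_eq_div, le_div_iff₀ (by positivity)] at this
  refine ⟨(d + 1) / F a₀, by positivity, fun p hp x hx => ?_⟩
  have hp' : p ∈ degreeLT ℝ (d + 1) := by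
    rw [degreeLT_succ_eq_degreeLE, mem_degreeLE]
    exact natDegree_le_iff_degree_le.mp hp
  calc |p.eval x| ≤ (d + 1) * ‖e ⟨p, hp'⟩‖ := by
        rw [eval_eq_sum_degreeLTEquiv hp']
        exact_mod_cast abs_sum_mul_pow_le _ (abs_le.mpr hx)
    _ ≤ (d + 1) / F a₀ * F (e ⟨p, hp'⟩) := by
        rw [div_mul_eq_mul_div, le_div_iff₀ hpos, mul_assoc, mul_comm _ (F a₀)]
        gcongr
        exact hlower _
    _ = (d + 1) / F a₀ * ∫ t in (-1)..1, |p.eval t| := by rw [hF]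

theorem hasDerivAt_collocPt (τ : ℝ) (n : ℕ) (s : ℝ) : HasDerivAt (collocPt τ n) (τ / 2) s := by
  have haffine : collocPt τ n = fun s => τ / 2 * s + (((n : ℝ) - 1) * τ + τ / 2) := by
    funext s; unfold collocPt; ring
  rw [haffine]
  exact (((hasDerivAt_id s).const_mul (τ / 2)).add_const _).congr_deriv (mul_one _)

theorem collocPt_neg_one (τ : ℝ) (n : ℕ) : collocPt τ n (-1) = ((n : ℝ) - 1) * τ := by
  simp [collocPt]

theorem collocPt_one (τ : ℝ) (n : ℕ) : collocPt τ n 1 = n * τ := by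
  unfold collocPt; ring

theorem collocPt_mem_Icc {τ : ℝ} (hτ : 0 ≤ τ) (n : ℕ) {s : ℝ} (hs : s ∈ Icc (-1 : ℝ) 1) :
    collocPt τ n s ∈ Icc (((n : ℝ) - 1) * τ) (n * τ) := by
  unfold collocPt; constructor <;> nlinarith [hs.1, hs.2]

theorem collocPt_mem_Ioo {τ : ℝ} (hτ : 0 < τ) (n : ℕ) {s : ℝ} (hs : s ∈ Ioo (-1 : ℝ) 1) :
    collocPt τ n s ∈ Ioo (((n : ℝ) - 1) * τ) (n * τ) := by
  unfold collocPt; constructor <;> nlinarith [hs.1, hs.2]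

section RealInner

variable {F : Type*} [NormedAddCommGroup F] [InnerProductSpace ℝ F] {m : ℕ} {f : ℝ → F}

theorem IsPolyDeg.differentiable (hf : IsPolyDeg F m f) : Differentiable ℝ f := by
  obtain ⟨φ, hφ⟩ := hf
  rw [funext hφ]
  fun_prop

theorem IsPolyDeg.exists_eval_eq_norm_sq (hf : IsPolyDeg F m f) :
    ∃ g : ℝ[X], g.natDegree ≤ 2 * m ∧ ∀ t, g.eval t = ‖f t‖ ^ 2 := by
  obtain ⟨φ, hφ⟩ := hf
  refine ⟨∑ i, ∑ j, C (inner ℝ (φ i) (φ j)) * X ^ ((i : ℕ) + j), ?_, fun t => ?_⟩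
  · refine natDegree_sum_le_of_forall_le _ _ fun i _ => natDegree_sum_le_of_forall_le _ _
      fun j _ => (natDegree_C_mul_X_pow_le _ _).trans ?_
    have := i.isLt; have := j.isLt
    omega
  · rw [← real_inner_self_eq_norm_sq, hφ, sum_inner]
    simp only [inner_sum, real_inner_smul_left, real_inner_smul_right, eval_finsetSum, eval_mul,
      eval_C, eval_pow, eval_X, pow_add]
    exact Finset.sum_congr rfl fun i _ => Finset.sum_congr rfl fun j _ => by ring

theorem IsPolyDeg.exists_eval_eq_norm_sq_collocPt (hf : IsPolyDeg F m f) (τ : ℝ) (n : ℕ) :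
    ∃ h : ℝ[X], h.natDegree ≤ 2 * m ∧ ∀ s, h.eval s = ‖f (collocPt τ n s)‖ ^ 2 ∧
      h.derivative.eval s = τ * inner ℝ (f (collocPt τ n s)) (deriv f (collocPt τ n s)) := by
  obtain ⟨g, hdeg, hg⟩ := hf.exists_eval_eq_norm_sq
  set L : ℝ[X] := C (τ / 2) * X + C (((n : ℝ) - 1) * τ + τ / 2)
  have hL : ∀ s, L.eval s = collocPt τ n s := fun s => by
    simp only [L, collocPt, eval_add, eval_mul, eval_C, eval_X]
    ring
  have heval : ∀ s, (g.comp L).eval s = ‖f (collocPt τ n s)‖ ^ 2 := by simp [eval_comp, hL, hg]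
  refine ⟨g.comp L, ?_, fun s => ⟨heval s, ?_⟩⟩
  · calc (g.comp L).natDegree ≤ g.natDegree * L.natDegree := natDegree_comp_le
      _ ≤ 2 * m * 1 := Nat.mul_le_mul hdeg natDegree_linear_le
      _ = 2 * m := mul_one _
  · have hd := (((hf.differentiable _).hasDerivAt).scomp s (hasDerivAt_collocPt τ n s)).norm_sq
    simp only [Function.comp_apply, ← heval] at hd
    rw [((g.comp L).hasDerivAt s).unique hd, real_inner_smul_right]
    ring

end RealInner

theorem re_inner_eq_zero_of_collocation {V : Type*} [NormedAddCommGroup V] [InnerProductSpace ℂ V]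
    {a : V → V → ℂ} (ha : ∀ v w, a v w = starRingEnd ℂ (a w v)) {G : V → V}
    (hG : ∀ v, (inner ℂ v (G v)).im = 0) {u u' : V} {r : ℝ}
    (h : Complex.I * inner ℂ u u' + a u u - r * inner ℂ u (G u) = 0) :
    (inner ℂ u u').re = 0 := by
  have ha_real : (a u u).im = 0 := by
    have := congrArg Complex.im (ha u u)
    rw [Complex.conj_im] at this
    linarith
  simpa [ha_real, hG u] using congrArg Complex.im h

theorem exists_eval_eq_norm_sq_of_collocation {V : Type*} [NormedAddCommGroup V]
    [InnerProductSpace ℂ V] {k : ℕ} {c : Fin k → ℝ} (hc : ∀ j, c j ∈ Ioo (-1 : ℝ) 1) {τ : ℝ}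
    (hτ : 0 < τ) {n : ℕ} {u : ℝ → V}
    (hu : ∃ p, IsPolyDeg V k p ∧ ∀ t ∈ Icc (((n : ℝ) - 1) * τ) (n * τ), u t = p t)
    (horth : ∀ j, (inner ℂ (u (collocPt τ n (c j))) (deriv u (collocPt τ n (c j)))).re = 0) :
    ∃ h : ℝ[X], h.natDegree ≤ 2 * k ∧ (∀ s, 0 ≤ h.eval s) ∧
      (∀ j, h.derivative.eval (c j) = 0) ∧
      ∀ s ∈ Icc (-1 : ℝ) 1, h.eval s = ‖u (collocPt τ n s)‖ ^ 2 := by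
  let _ : InnerProductSpace ℝ V := InnerProductSpace.complexToReal
  obtain ⟨p, hp, hup⟩ := hu
  obtain ⟨h, hdeg, hh⟩ := hp.exists_eval_eq_norm_sq_collocPt τ n
  refine ⟨h, hdeg, fun s => (hh s).1 ▸ by positivity, fun j => ?_,
    fun s hs => by rw [(hh s).1, hup _ (collocPt_mem_Icc hτ.le n hs)]⟩
  have hmem := collocPt_mem_Ioo hτ n (hc j)
  have hderiv : deriv u (collocPt τ n (c j)) = deriv p (collocPt τ n (c j)) :=
    (Filter.eventuallyEq_of_mem (Ioo_mem_nhds hmem.1 hmem.2)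
      fun t ht => hup t (Ioo_subset_Icc_self ht)).deriv_eq
  rw [(hh _).2, real_inner_eq_re_inner ℂ, ← hderiv, ← hup _ (Ioo_subset_Icc_self hmem)]
  simp [horth j]

theorem exists_eval_le_mul_eval_neg_one (k : ℕ) :
    ∃ C, 0 < C ∧ ∀ c : Fin k → ℝ, Function.Injective c → (∀ j, (legendre k).eval (c j) = 0) →
      ∀ h : ℝ[X], h.natDegree ≤ 2 * k → (∀ x, 0 ≤ h.eval x) →
        (∀ j, h.derivative.eval (c j) = 0) → ∀ x ∈ Icc (-1 : ℝ) 1, h.eval x ≤ C * h.eval (-1) := by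
  obtain ⟨C, hC, hbound⟩ := exists_abs_eval_le_mul_integral_abs (2 * k)
  refine ⟨2 * C, by positivity, fun c hc hroot h hdeg hnonneg hder x hx => ?_⟩
  have hint := integral_eval_le_eval_one_add_eval_neg_one hc hroot hdeg hder
    (coeff_nonneg_of_eval_nonneg hnonneg hdeg)
  rw [eval_one_eq_eval_neg_one hc hroot hdeg hder] at hint
  calc h.eval x = |h.eval x| := (abs_of_nonneg (hnonneg x)).symm
    _ ≤ C * ∫ t in (-1)..1, |h.eval t| := hbound h hdeg x hx
    _ = C * ∫ t in (-1)..1, h.eval t := by simp_rw [abs_of_nonneg (hnonneg _)]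
    _ ≤ 2 * C * h.eval (-1) := by nlinarith

theorem exists_norm_sq_collocPt_le (k : ℕ) :
    ∃ C, 0 < C ∧ ∀ c : Fin k → ℝ, Function.Injective c → (∀ j, (legendre k).eval (c j) = 0) →
      (∀ j, c j ∈ Ioo (-1 : ℝ) 1) →
      ∀ (V : Type*) [NormedAddCommGroup V] [InnerProductSpace ℂ V] (τ : ℝ), 0 < τ →
      ∀ (n : ℕ) (u : ℝ → V),
        (∃ p, IsPolyDeg V k p ∧ ∀ t ∈ Icc (((n : ℝ) - 1) * τ) (n * τ), u t = p t) →
        (∀ j, (inner ℂ (u (collocPt τ n (c j))) (deriv u (collocPt τ n (c j)))).re = 0) →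
        ‖u (n * τ)‖ ^ 2 = ‖u ((n - 1) * τ)‖ ^ 2 ∧
          ∀ j, ‖u (collocPt τ n (c j))‖ ^ 2 ≤ C * ‖u ((n - 1) * τ)‖ ^ 2 := by
  obtain ⟨C, hC, hbound⟩ := exists_eval_le_mul_eval_neg_one k
  refine ⟨C, hC, fun c hc hroot hcmem V _ _ τ hτ n u hu horth => ?_⟩
  obtain ⟨h, hdeg, hnonneg, hder, heval⟩ :=
    exists_eval_eq_norm_sq_of_collocation hcmem hτ hu horth
  have hleft := heval (-1) (by norm_num)
  rw [collocPt_neg_one] at hleft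
  have hends := eval_one_eq_eval_neg_one hc hroot hdeg hder
  rw [heval 1 (by norm_num), hleft, collocPt_one] at hends
  refine ⟨hends, fun j => ?_⟩
  have hcj := Ioo_subset_Icc_self (hcmem j)
  simpa only [heval _ hcj, hleft] using hbound c hc hroot h hdeg hnonneg hder _ hcj

theorem mass_bound_at_internal_stages_general (k : ℕ) :
    -- C depends only on k (not on τ, N, V, a, G, u_h, r_h)
    ∃ C : ℝ, 0 < C ∧
      ∀ (N : ℕ), 1 ≤ N → ∀ (T : ℝ), 0 < T →
      -- the Gauss points of [-1,1]: the k roots of the Legendre polynomial of degree k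
      ∀ (c : Fin k → ℝ), StrictMono c →
        (∀ j, (legendre k).eval (c j) = 0) →
        (∀ j, c j ∈ Set.Ioo (-1 : ℝ) 1) →
      -- V : a finite-dimensional complex inner product space
      ∀ (V : Type u) [NormedAddCommGroup V] [InnerProductSpace ℂ V] [FiniteDimensional ℂ V],
      -- a : a Hermitian sesquilinear form (paper's convention: linear in the first argument)
      ∀ (a : V → V → ℂ),
        (∀ v₁ v₂ w : V, a (v₁ + v₂) w = a v₁ w + a v₂ w) →
        (∀ (z : ℂ) (v w : V), a (z • v) w = z * a v w) →
        (∀ v w : V, a v w = starRingEnd ℂ (a w v)) →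
      -- G : an arbitrary map such that ⟨G v, v⟩ is real
      -- (paper's ⟨x, y⟩, linear in x, is Mathlib's `inner y x`)
      ∀ (G : V → V), (∀ v : V, (inner ℂ v (G v) : ℂ).im = 0) →
      -- numerical solution: continuous, piecewise polynomial of degree ≤ k in time
      ∀ (uh : ℝ → V) (rh : ℝ → ℝ),
        (∀ n ∈ Finset.Icc 1 N, ∃ p : ℝ → V, IsPolyDeg V k p ∧
          ∀ t ∈ Set.Icc (((n : ℝ) - 1) * (T / N)) ((n : ℝ) * (T / N)), uh t = p t) →
        (∀ n ∈ Finset.Icc 1 N, ∃ q : ℝ → ℝ, IsPolyDeg ℝ k q ∧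
          ∀ t ∈ Set.Icc (((n : ℝ) - 1) * (T / N)) ((n : ℝ) * (T / N)), rh t = q t) →
        -- Gauss collocation equation (i)
        (∀ n ∈ Finset.Icc 1 N, ∀ j : Fin k, ∀ v : V,
          Complex.I * (inner ℂ v (deriv uh (collocPt (T / N) n (c j))) : ℂ)
            + a (uh (collocPt (T / N) n (c j))) v
            - (rh (collocPt (T / N) n (c j)) : ℂ)
                * (inner ℂ v (G (uh (collocPt (T / N) n (c j)))) : ℂ) = 0) →
        -- Gauss collocation equation (ii)
        (∀ n ∈ Finset.Icc 1 N, ∀ j : Fin k,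
          deriv rh (collocPt (T / N) n (c j))
            = (1 / 2) * ((inner ℂ (deriv uh (collocPt (T / N) n (c j)))
                (G (uh (collocPt (T / N) n (c j)))) : ℂ)).re) →
        -- conclusion: ‖u_h(t_{nj})‖ ≤ C ‖u_h(0)‖ for all n = 1, ..., N and j = 1, ..., k
        ∀ n ∈ Finset.Icc 1 N, ∀ j : Fin k,
          ‖uh (collocPt (T / N) n (c j))‖ ≤ C * ‖uh 0‖ := by
  obtain ⟨C, hC, hinterval⟩ := exists_norm_sq_collocPt_le k
  refine ⟨√C, by positivity, ?_⟩
  intro N hN T hT c hc hroot hcmem V _ _ _ a _ _ ha G hG uh rh hu _ hcol _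
  have hstep (n : ℕ) (hn : n ∈ Finset.Icc 1 N) :=
    hinterval c hc.injective hroot hcmem V (T / N) (div_pos hT (by exact_mod_cast hN)) n uh
      (hu n hn) fun j => re_inner_eq_zero_of_collocation ha hG (hcol n hn j _)
  have hnode : ∀ n ≤ N, ‖uh (n * (T / N))‖ ^ 2 = ‖uh 0‖ ^ 2 := by
    intro n hn
    induction n with
    | zero => simp
    | succ n ih =>
      rw [(hstep (n + 1) (Finset.mem_Icc.mpr ⟨by omega, hn⟩)).1, ← ih (by omega)]
      push_cast
      ring_nf
  intro n hn j
  have hsq := (hstep n hn).2 j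
  rw [show (n : ℝ) - 1 = ((n - 1 : ℕ) : ℝ) by push_cast [(Finset.mem_Icc.mp hn).1]; ring,
    hnode _ (by have := (Finset.mem_Icc.mp hn).2; omega)] at hsq
  rw [← Real.sqrt_sq (norm_nonneg (uh _)), ← Real.sqrt_sq (norm_nonneg (uh 0)),
    ← Real.sqrt_mul hC.le]
  exact Real.sqrt_le_sqrt hsq

theorem mass_bound_at_internal_stages (k : ℕ) (hk : 1 ≤ k) :
    -- C depends only on k (not on τ, N, V, a, G, u_h, r_h)
    ∃ C : ℝ, 0 < C ∧
      ∀ (N : ℕ), 1 ≤ N → ∀ (T : ℝ), 0 < T →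
      -- the Gauss points of [-1,1]: the k roots of the Legendre polynomial of degree k
      ∀ (c : Fin k → ℝ), StrictMono c →
        (∀ j, (legendre k).eval (c j) = 0) →
        (∀ j, c j ∈ Set.Ioo (-1 : ℝ) 1) →
      -- V : a finite-dimensional complex inner product space
      ∀ (V : Type u) [NormedAddCommGroup V] [InnerProductSpace ℂ V] [FiniteDimensional ℂ V],
      -- a : a Hermitian sesquilinear form (paper's convention: linear in the first argument)
      ∀ (a : V → V → ℂ),
        (∀ v₁ v₂ w : V, a (v₁ + v₂) w = a v₁ w + a v₂ w) →
        (∀ (z : ℂ) (v w : V), a (z • v) w = z * a v w) →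
        (∀ v w : V, a v w = starRingEnd ℂ (a w v)) →
      -- G : an arbitrary map such that ⟨G v, v⟩ is real
      -- (paper's ⟨x, y⟩, linear in x, is Mathlib's `inner y x`)
      ∀ (G : V → V), (∀ v : V, (inner ℂ v (G v) : ℂ).im = 0) →
      -- numerical solution: continuous, piecewise polynomial of degree ≤ k in time
      ∀ (uh : ℝ → V) (rh : ℝ → ℝ),
        (∀ n ∈ Finset.Icc 1 N, ∃ p : ℝ → V, IsPolyDeg V k p ∧
          ∀ t ∈ Set.Icc (((n : ℝ) - 1) * (T / N)) ((n : ℝ) * (T / N)), uh t = p t) →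
        (∀ n ∈ Finset.Icc 1 N, ∃ q : ℝ → ℝ, IsPolyDeg ℝ k q ∧
          ∀ t ∈ Set.Icc (((n : ℝ) - 1) * (T / N)) ((n : ℝ) * (T / N)), rh t = q t) →
        -- Gauss collocation equation (i)
        (∀ n ∈ Finset.Icc 1 N, ∀ j : Fin k, ∀ v : V,
          Complex.I * (inner ℂ v (deriv uh (collocPt (T / N) n (c j))) : ℂ)
            + a (uh (collocPt (T / N) n (c j))) v
            - (rh (collocPt (T / N) n (c j)) : ℂ)
                * (inner ℂ v (G (uh (collocPt (T / N) n (c j)))) : ℂ) = 0) →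
        -- Gauss collocation equation (ii)
        (∀ n ∈ Finset.Icc 1 N, ∀ j : Fin k,
          deriv rh (collocPt (T / N) n (c j))
            = (1 / 2) * ((inner ℂ (deriv uh (collocPt (T / N) n (c j)))
                (G (uh (collocPt (T / N) n (c j)))) : ℂ)).re) →
        -- conclusion: ‖u_h(t_{nj})‖ ≤ C ‖u_h(0)‖ for all n = 1, ..., N and j = 1, ..., k
        ∀ n ∈ Finset.Icc 1 N, ∀ j : Fin k,
          ‖uh (collocPt (T / N) n (c j))‖ ≤ C * ‖uh 0‖ :=
  mass_bound_at_internal_stages_general k
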